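/- arXiv:2504.04505 — 3 statements merged into one kernel-verified Lean document; each statement's English description precedes it below -/
import Mathlib

section
/- Let μ and ν be probability measures on a measurable space X, and let h : X → ℝ be a measurable function with 0 ≤ h(x) ≤ B for all x, for some constant B > 0. Then |E_μ[h] − E_ν[h]| ≤ 3·E_ν[h] + 4B·D_H²(μ, ν). -/
open MeasureTheory
open scoped ENNReal

/-- The squared Hellinger distance between two measures `P` and `Q`, defined via their
densities with respect to the dominating measure `P + Q`:
`D_H²(P, Q) = 1 - ∫ √(dP/d(P+Q) · dQ/d(P+Q)) d(P+Q)`. -/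
noncomputable def hellingerSq {Ω : Type*} [MeasurableSpace Ω] (P Q : Measure Ω) : ℝ :=
  1 - ∫ x, Real.sqrt ((P.rnDeriv (P + Q) x).toReal * (Q.rnDeriv (P + Q) x).toReal) ∂(P + Q)

/-- For probability measures `μ`, `ν` and a measurable `h` with `0 ≤ h ≤ B`,
`|E_μ[h] - E_ν[h]| ≤ 3·E_ν[h] + 4B·D_H²(μ, ν)`. -/
theorem abs_integral_sub_le_hellinger {Ω : Type*} [MeasurableSpace Ω]
    (μ ν : Measure Ω) [IsProbabilityMeasure μ] [IsProbabilityMeasure ν]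
    (h : Ω → ℝ) (hmeas : Measurable h) (B : ℝ) (hB : 0 < B)
    (hh : ∀ x, 0 ≤ h x ∧ h x ≤ B) :
    |(∫ x, h x ∂μ) - ∫ x, h x ∂ν| ≤
      3 * (∫ x, h x ∂ν) + 4 * B * hellingerSq μ ν := by
  set ρ : Measure Ω := μ + ν with hρdef
  have hμρ : μ ≪ ρ := Measure.absolutelyContinuous_of_le (Measure.le_add_right le_rfl)
  have hνρ : ν ≪ ρ := Measure.absolutelyContinuous_of_le (Measure.le_add_left le_rfl)
  set p : Ω → ℝ := fun x => (μ.rnDeriv ρ x).toReal with hpdef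
  set q : Ω → ℝ := fun x => (ν.rnDeriv ρ x).toReal with hqdef
  have hp0 : ∀ x, 0 ≤ p x := fun x => ENNReal.toReal_nonneg
  have hq0 : ∀ x, 0 ≤ q x := fun x => ENNReal.toReal_nonneg
  have hpm : Measurable p := (Measure.measurable_rnDeriv μ ρ).ennreal_toReal
  have hqm : Measurable q := (Measure.measurable_rnDeriv ν ρ).ennreal_toReal
  have hintp : Integrable p ρ := Measure.integrable_toReal_rnDeriv
  have hintq : Integrable q ρ := Measure.integrable_toReal_rnDeriv
  have hBnorm : ∃ C, ∀ x, ‖h x‖ ≤ C := ⟨B, fun x => by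
    rw [Real.norm_eq_abs, abs_of_nonneg (hh x).1]; exact (hh x).2⟩
  have hint_ph : Integrable (fun x => h x * p x) ρ :=
    hintp.bdd_mul hmeas.aestronglyMeasurable (Filter.Eventually.of_forall hBnorm.choose_spec)
  have hint_qh : Integrable (fun x => h x * q x) ρ :=
    hintq.bdd_mul hmeas.aestronglyMeasurable (Filter.Eventually.of_forall hBnorm.choose_spec)
  -- integral identities
  have hμint : ∫ x, h x * p x ∂ρ = ∫ x, h x ∂μ := by
    rw [← integral_rnDeriv_smul hμρ (f := h)]
    simp_rw [smul_eq_mul, mul_comm]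
    rfl
  have hνint : ∫ x, h x * q x ∂ρ = ∫ x, h x ∂ν := by
    rw [← integral_rnDeriv_smul hνρ (f := h)]
    simp_rw [smul_eq_mul, mul_comm]
    rfl
  have hip : ∫ x, p x ∂ρ = 1 := by
    rw [hpdef]; simp [Measure.integral_toReal_rnDeriv hμρ]
  have hiq : ∫ x, q x ∂ρ = 1 := by
    rw [hqdef]; simp [Measure.integral_toReal_rnDeriv hνρ]
  -- the squared difference of square roots
  set s : Ω → ℝ := fun x => Real.sqrt (p x) - Real.sqrt (q x) with hsdef
  have hs_sq : ∀ x, s x ^ 2 = p x + q x - 2 * Real.sqrt (p x * q x) := by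
    intro x
    have h1 : Real.sqrt (p x) ^ 2 = p x := Real.sq_sqrt (hp0 x)
    have h2 : Real.sqrt (q x) ^ 2 = q x := Real.sq_sqrt (hq0 x)
    have h3 : Real.sqrt (p x * q x) = Real.sqrt (p x) * Real.sqrt (q x) :=
      Real.sqrt_mul (hp0 x) _
    simp only [hsdef]; rw [h3]; nlinarith
  have hsm : Measurable fun x => s x ^ 2 :=
    ((hpm.sqrt.sub hqm.sqrt).pow_const 2)
  have hint_s2 : Integrable (fun x => s x ^ 2) ρ := by
    refine Integrable.mono' ((hintp.add hintq).const_mul 2) hsm.aestronglyMeasurable ?_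
    refine Filter.Eventually.of_forall fun x => ?_
    rw [Real.norm_eq_abs, abs_of_nonneg (sq_nonneg _)]
    have h1 : Real.sqrt (p x) ^ 2 = p x := Real.sq_sqrt (hp0 x)
    have h2 : Real.sqrt (q x) ^ 2 = q x := Real.sq_sqrt (hq0 x)
    simp only [hsdef, Pi.add_apply]
    nlinarith [sq_nonneg (Real.sqrt (p x) + Real.sqrt (q x))]
  have hint_sqrt : Integrable (fun x => Real.sqrt (p x * q x)) ρ := by
    refine Integrable.mono' (hintp.add hintq) (hpm.mul hqm).sqrt.aestronglyMeasurable ?_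
    refine Filter.Eventually.of_forall fun x => ?_
    rw [Real.norm_eq_abs, abs_of_nonneg (Real.sqrt_nonneg _)]
    have h3 : Real.sqrt (p x * q x) = Real.sqrt (p x) * Real.sqrt (q x) :=
      Real.sqrt_mul (hp0 x) _
    have h1 : Real.sqrt (p x) ^ 2 = p x := Real.sq_sqrt (hp0 x)
    have h2 : Real.sqrt (q x) ^ 2 = q x := Real.sq_sqrt (hq0 x)
    have := sq_nonneg (Real.sqrt (p x) - Real.sqrt (q x))
    simp only [Pi.add_apply]
    nlinarith
  -- ∫ s² = 2 * hellingerSq μ ν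
  have hs2int : ∫ x, s x ^ 2 ∂ρ = 2 * hellingerSq μ ν := by
    have : ∫ x, s x ^ 2 ∂ρ
        = ∫ x, (p x + q x - 2 * Real.sqrt (p x * q x)) ∂ρ := by
      congr 1; funext x; exact hs_sq x
    have hpq : Integrable (fun x => p x + q x) ρ := hintp.add hintq
    rw [this, integral_sub hpq (hint_sqrt.const_mul 2),
      integral_add hintp hintq, hip, hiq, integral_const_mul]
    rw [hellingerSq, ← hρdef]
    ring
  -- pointwise bound
  have hpt : ∀ x, |h x * p x - h x * q x| ≤ h x * q x + 2 * B * s x ^ 2 := by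
    intro x
    obtain ⟨hh0, hhB⟩ := hh x
    have h1 : Real.sqrt (p x) ^ 2 = p x := Real.sq_sqrt (hp0 x)
    have h2 : Real.sqrt (q x) ^ 2 = q x := Real.sq_sqrt (hq0 x)
    set a := Real.sqrt (p x)
    set b := Real.sqrt (q x)
    have ha : 0 ≤ a := Real.sqrt_nonneg _
    have hb : 0 ≤ b := Real.sqrt_nonneg _
    rw [abs_le]
    constructor
    · simp only [hsdef]
      nlinarith [mul_nonneg hh0 (sq_nonneg a), mul_nonneg hB.le (sq_nonneg (a - b))]
    · simp only [hsdef]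
      nlinarith [mul_nonneg hh0 (sq_nonneg (a - 2 * b)),
        mul_nonneg (sub_nonneg.2 hhB) (sq_nonneg (a - b))]
  -- main chain
  have hdiff : (∫ x, h x ∂μ) - ∫ x, h x ∂ν = ∫ x, (h x * p x - h x * q x) ∂ρ := by
    rw [integral_sub hint_ph hint_qh, hμint, hνint]
  rw [hdiff]
  have habs : |∫ x, (h x * p x - h x * q x) ∂ρ|
      ≤ ∫ x, |h x * p x - h x * q x| ∂ρ := by
    have := norm_integral_le_integral_norm (fun x => h x * p x - h x * q x) (μ := ρ)
    simpa [Real.norm_eq_abs] using this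
  have hmono : ∫ x, |h x * p x - h x * q x| ∂ρ
      ≤ ∫ x, (h x * q x + 2 * B * s x ^ 2) ∂ρ := by
    refine integral_mono_of_nonneg (Filter.Eventually.of_forall fun x => abs_nonneg _)
      (hint_qh.add (hint_s2.const_mul (2 * B)))
      (Filter.Eventually.of_forall fun x => hpt x)
  have heq : ∫ x, (h x * q x + 2 * B * s x ^ 2) ∂ρ
      = (∫ x, h x ∂ν) + 4 * B * hellingerSq μ ν := by
    rw [integral_add hint_qh (hint_s2.const_mul (2 * B)), integral_const_mul, hνint,
      hs2int]
    ring
  have hnn : 0 ≤ ∫ x, h x ∂ν := integral_nonneg fun x => (hh x).1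
  linarith [habs.trans (hmono.trans_eq heq)]
end

section
/- Let U be a finite set with |U| = M ≥ 2, let T be a set of binary tests t : U → {true, false}, and let C ≥ 1 be a real number such that for every subset S ⊆ U with |S| ≥ 2 there exists a test t ∈ T satisfying |{ v ∈ S : t(v) ≠ t(u) }| ≥ |S|/C for every u ∈ S. Then there exists a binary decision tree whose internal nodes are labeled by tests from T and whose leaves are labeled by elements of U, of depth at most ⌈C·ln(M)⌉, such that for every u ∈ U, the path obtained by starting at the root and at each internal node labeled t branching according to the outcome t(u) terminates at a leaf labeled u. -/
/-- A binary decision tree over a family of tests `T` and a set of labels `U`: internal nodes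
carry a test with one child per outcome, leaves carry an element of `U`. -/
inductive DTree (U T : Type*) where
  | leaf : U → DTree U T
  | node : T → DTree U T → DTree U T → DTree U T

namespace DTree

/-- The depth of a decision tree: the maximal number of internal nodes on a
root-to-leaf path. -/
def depth {U T : Type*} : DTree U T → ℕ
  | leaf _ => 0
  | node _ l r => max l.depth r.depth + 1

/-- Classify an element `u` by starting at the root and branching at each internal node
labeled `t` according to the outcome `test t u`, returning the label of the reached leaf. -/
def classify {U T : Type*} (test : T → U → Bool) : DTree U T → U → U
  | leaf v, _ => v
  | node t l r, u => if test t u then classify test l u else classify test r u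

end DTree

/-- **Greedy most-even-split guarantee for decision trees.** If for every subset `S` of the
`M`-element set `U` with `|S| ≥ 2` there is a test removing at least a `1/C` fraction of `S`
whatever the true element `u ∈ S` is, then there is a decision tree of depth at most
`⌈C · ln M⌉` classifying every element of `U` correctly. -/
theorem exists_decision_tree_of_greedy_split {U : Type*} [Fintype U] [DecidableEq U]
    {T : Type*} (test : T → U → Bool)
    (M : ℕ) (hM : Fintype.card U = M) (hM2 : 2 ≤ M)
    (C : ℝ) (hC : 1 ≤ C)
    (hgreedy : ∀ S : Finset U, 2 ≤ S.card → ∃ t : T, ∀ u ∈ S,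
      (S.card : ℝ) / C ≤ (({v ∈ S | test t v ≠ test t u}).card : ℝ)) :
    ∃ tr : DTree U T, tr.depth ≤ ⌈C * Real.log M⌉₊ ∧
      ∀ u : U, tr.classify test u = u := by
  have hU : Nonempty U := by
    rw [← Fintype.card_pos_iff, hM]; omega
  obtain ⟨u0⟩ := hU
  have hC0 : 0 < C := lt_of_lt_of_le one_pos hC
  -- C must in fact be > 1
  have hC1 : 1 < C := by
    by_contra h
    have hCeq : C = 1 := le_antisymm (not_lt.mp h) hC
    obtain ⟨t, ht⟩ := hgreedy Finset.univ (by simp [hM, hM2])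
    have h0 := ht u0 (Finset.mem_univ _)
    have hsub : {v ∈ (Finset.univ : Finset U) | test t v ≠ test t u0} ⊆
        Finset.univ.erase u0 := by
      intro v hv
      simp only [Finset.mem_filter, Finset.mem_univ, true_and] at hv
      exact Finset.mem_erase.mpr ⟨fun h => hv (by rw [h]), Finset.mem_univ _⟩
    have hcard : ({v ∈ (Finset.univ : Finset U) | test t v ≠ test t u0}).card ≤ M - 1 := by
      calc _ ≤ (Finset.univ.erase u0).card := Finset.card_le_card hsub
        _ = M - 1 := by rw [Finset.card_erase_of_mem (Finset.mem_univ _), Finset.card_univ, hM]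
    rw [hCeq, div_one] at h0
    have h0' : (Finset.univ : Finset U).card ≤
        ({v ∈ (Finset.univ : Finset U) | test t v ≠ test t u0}).card := by exact_mod_cast h0
    rw [Finset.card_univ, hM] at h0'
    omega
  set r : ℝ := 1 - 1/C with hr
  have hdiv : 1/C < 1 := by rw [div_lt_one hC0]; exact hC1
  have hdiv0 : (0:ℝ) < 1/C := by positivity
  have hr0 : 0 < r := by rw [hr]; linarith
  have hr1 : r < 1 := by rw [hr]; linarith
  have key : ∀ d : ℕ, ∀ S : Finset U, (S.card : ℝ) * r ^ d < 2 →
      ∃ tr : DTree U T, tr.depth ≤ d ∧ ∀ u ∈ S, tr.classify test u = u := by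
    intro d
    induction d with
    | zero =>
      intro S hS
      simp only [pow_zero, mul_one] at hS
      have hcard : S.card ≤ 1 := by exact_mod_cast Nat.lt_succ_iff.mp (by exact_mod_cast hS)
      rcases Finset.eq_empty_or_nonempty S with h | ⟨u, hu⟩
      · exact ⟨DTree.leaf u0, le_refl _, by simp [h]⟩
      · refine ⟨DTree.leaf u, le_refl _, fun v hv => ?_⟩
        have := Finset.card_le_one.mp hcard v hv u hu
        simp [DTree.classify, this]
    | succ d ih =>
      intro S hS
      by_cases hcard : S.card ≤ 1
      · obtain ⟨tr, h1, h2⟩ := ih S (by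
          have h1 : (S.card : ℝ) ≤ 1 := by exact_mod_cast hcard
          have h2 : r ^ d ≤ 1 := pow_le_one₀ hr0.le hr1.le
          nlinarith)
        exact ⟨tr, le_trans h1 (Nat.le_succ d), h2⟩
      · push_neg at hcard
        obtain ⟨t, ht⟩ := hgreedy S hcard
        set Sl := S.filter (fun v => test t v = true) with hSl
        set Sr := S.filter (fun v => ¬ test t v = true) with hSr
        have hsum : Sl.card + Sr.card = S.card :=
          Finset.card_filter_add_card_filter_not _
        -- bound for the left child
        have hl : (Sl.card : ℝ) * r ^ d < 2 := by
          rcases Finset.eq_empty_or_nonempty Sl with h | ⟨u, hu⟩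
          · simp [h]
          · have hu' : u ∈ S := (Finset.mem_filter.mp hu).1
            have hut : test t u = true := (Finset.mem_filter.mp hu).2
            have heq : {v ∈ S | test t v ≠ test t u} = Sr := by
              apply Finset.filter_congr
              intro v _
              simp [hut]
            have h1 : (S.card : ℝ) / C ≤ Sr.card := by rw [← heq]; exact ht u hu'
            have h2 : (Sl.card : ℝ) = S.card - Sr.card := by
              have := hsum; push_cast [← this]; ring
            have h3 : (Sl.card : ℝ) ≤ S.card * r := by
              rw [h2, hr]; rw [mul_sub, mul_one, mul_one_div]; linarith
            have h4 : (0:ℝ) ≤ r ^ d := by positivity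
            calc (Sl.card : ℝ) * r ^ d ≤ (S.card * r) * r ^ d :=
                  mul_le_mul_of_nonneg_right h3 h4
              _ = S.card * r ^ (d + 1) := by ring
              _ < 2 := hS
        have hrt : (Sr.card : ℝ) * r ^ d < 2 := by
          rcases Finset.eq_empty_or_nonempty Sr with h | ⟨u, hu⟩
          · simp [h]
          · have hu' : u ∈ S := (Finset.mem_filter.mp hu).1
            have hut : ¬ test t u = true := (Finset.mem_filter.mp hu).2
            have hut' : test t u = false := by simpa using hut
            have heq : {v ∈ S | test t v ≠ test t u} = Sl := by
              apply Finset.filter_congr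
              intro v _
              simp [hut']
            have h1 : (S.card : ℝ) / C ≤ Sl.card := by rw [← heq]; exact ht u hu'
            have h2 : (Sr.card : ℝ) = S.card - Sl.card := by
              have := hsum; push_cast [← this]; ring
            have h3 : (Sr.card : ℝ) ≤ S.card * r := by
              rw [h2, hr]; rw [mul_sub, mul_one, mul_one_div]; linarith
            have h4 : (0:ℝ) ≤ r ^ d := by positivity
            calc (Sr.card : ℝ) * r ^ d ≤ (S.card * r) * r ^ d :=
                  mul_le_mul_of_nonneg_right h3 h4
              _ = S.card * r ^ (d + 1) := by ring
              _ < 2 := hS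
        obtain ⟨tl, htl1, htl2⟩ := ih Sl hl
        obtain ⟨trr, htr1, htr2⟩ := ih Sr hrt
        refine ⟨DTree.node t tl trr, ?_, ?_⟩
        · simp [DTree.depth]; exact ⟨htl1, htr1⟩
        · intro u hu
          by_cases h : test t u
          · have : u ∈ Sl := Finset.mem_filter.mpr ⟨hu, h⟩
            simpa [DTree.classify, h] using htl2 u this
          · have : u ∈ Sr := Finset.mem_filter.mpr ⟨hu, h⟩
            simpa [DTree.classify, h] using htr2 u this
  -- final bound: M * r ^ D < 2 for D = ⌈C log M⌉₊
  set D := ⌈C * Real.log M⌉₊ with hD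
  have hM0 : (0:ℝ) < M := by exact_mod_cast lt_of_lt_of_le two_pos hM2
  have hbound : (M : ℝ) * r ^ D < 2 := by
    have h1 : r ≤ Real.exp (-(1/C)) := by
      have := Real.add_one_le_exp (-(1/C))
      rw [hr]; linarith
    have h2 : r ^ D ≤ Real.exp (-(1/C)) ^ D := pow_le_pow_left₀ hr0.le h1 D
    have h3 : Real.exp (-(1/C)) ^ D = Real.exp (-(D/C)) := by
      rw [← Real.exp_nat_mul]; ring_nf
    have h4 : C * Real.log M ≤ D := Nat.le_ceil _
    have h5 : Real.log M ≤ D / C := by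
      rw [le_div_iff₀ hC0]; linarith [mul_comm C (Real.log M)]
    have h6 : Real.exp (-(D/C)) ≤ Real.exp (-Real.log M) :=
      Real.exp_le_exp.mpr (by linarith)
    have h7 : Real.exp (-Real.log M) = 1 / M := by
      rw [Real.exp_neg, Real.exp_log hM0]; ring
    have h8 : r ^ D ≤ 1 / M := by rw [← h7]; exact le_trans h2 (h3 ▸ h6)
    calc (M : ℝ) * r ^ D ≤ M * (1 / M) := by
          apply mul_le_mul_of_nonneg_left h8 hM0.le
      _ = 1 := by field_simp
      _ < 2 := one_lt_two
  obtain ⟨tr, h1, h2⟩ := key D Finset.univ (by rwa [Finset.card_univ, hM])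
  exact ⟨tr, h1, fun u => h2 u (Finset.mem_univ u)⟩
end

section
/- There exists an absolute constant c_γ > 0 with the following property. Let M ≥ 2 and K be positive integers, let ε ∈ (0, 1/40] and λ ∈ (0, 1/4], let μ : {1,…,M} × {1,…,K} → ℝ be mean rewards, let k* : {1,…,M} → {1,…,K} assign optimal arms, and let ν_i(k) (for i ∈ {1,…,M}, k ∈ {1,…,K}) be probability measures, satisfying the hard-instance conditions: (1) μ_i(k*_i) = 3/4 + 10ε for every i, and μ_j(k*_i) = 3/4 for every j ≠ i; (2) for every arm k in the separating set A_λ := {1,…,K} \ {k*_i : i ∈ [M]} and every i, μ_i(k) ∈ { (1+λ)/2, (1−λ)/2 }; (3) for every k ∈ A_λ and all i, m, D_H²(ν_i(k), ν_m(k)) ≤ λ² · 1{μ_i(k) ≠ μ_m(k)}; (4) for every k ∉ A_λ and all i, m, D_H²(ν_i(k), ν_m(k)) ≤ 200ε², and A_λ is nonempty. Define the randomized classification-coefficient C̃ := ( min over S ⊆ [M] with |S| > 1 of max over probability distributions π on A_λ of min over i ∈ S of (1/|S|) Σ_{m ∈ S} Σ_{k ∈ A_λ} π(k)·1{μ_i(k)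 ≠ μ_m(k)} )^{−1}, the gaps Δ_i(k) := μ_i(k*_i) − μ_i(k), and for γ > 0 the decision-estimation coefficient dec_γ := max over probability distributions ω on [M] of min over probability distributions π on [K] of max over i ∈ [M] of ( Σ_k π(k)·Δ_i(k) − γ · Σ_k Σ_m π(k)·ω(m)·D_H²(ν_i(k), ν_m(k)) ). Then for every γ with 0 < γ ≤ c_γ · min( ε^{−1}, λ^{−2}·C̃ ), it holds that dec_γ > 3ε. -/
open MeasureTheory
open scoped ENNReal

/-- indicator that two means differ -/
noncomputable def dInd {M K : ℕ} (μ : Fin M → Fin K → ℝ) (i m : Fin M) (k : Fin K) : ℝ :=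
  if μ i k = μ m k then 0 else 1

lemma dInd_nonneg {M K : ℕ} (μ : Fin M → Fin K → ℝ) (i m : Fin M) (k : Fin K) :
    0 ≤ dInd μ i m k := by unfold dInd; split <;> norm_num

lemma counting {M K : ℕ} (μ : Fin M → Fin K → ℝ) (k : Fin K) (S : Finset (Fin M))
    (x y : ℝ) (htwo : ∀ i ∈ S, μ i k = x ∨ μ i k = y) (i0 : Fin M) (hi0 : i0 ∈ S) :
    ∑ i ∈ S, ∑ m ∈ S, dInd μ i m k ≤ 2 * S.card * ∑ m ∈ S, dInd μ i0 m k := by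
  classical
  set F := S.filter (fun m => ¬ μ i0 k = μ m k) with hFdef
  have hd0 : ∑ m ∈ S, dInd μ i0 m k = (F.card : ℝ) := by
    rw [hFdef, ← Finset.sum_boole]
    apply Finset.sum_congr rfl
    intro m _
    by_cases h : μ i0 k = μ m k <;> simp [dInd, h]
  have hflip : ∀ i ∈ S, ¬ μ i0 k = μ i k → ∀ m ∈ S, dInd μ i m k = 1 - dInd μ i0 m k := by
    intro i hi hne m hm
    rcases htwo i hi with h1 | h1 <;> rcases htwo m hm with h2 | h2 <;>
      rcases htwo i0 hi0 with h3 | h3 <;>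
      simp only [dInd, h1, h2, h3] at hne ⊢ <;> simp_all
    all_goals exact fun h => hne h.symm
  have hsame : ∀ i ∈ S, μ i0 k = μ i k → ∀ m ∈ S, dInd μ i m k = dInd μ i0 m k := by
    intro i hi he m hm
    simp [dInd, ← he]
  have hsplit :
      ∑ i ∈ S.filter (fun i => μ i0 k = μ i k), (∑ m ∈ S, dInd μ i m k)
        + ∑ i ∈ S.filter (fun i => ¬ μ i0 k = μ i k), (∑ m ∈ S, dInd μ i m k)
      = ∑ i ∈ S, ∑ m ∈ S, dInd μ i m k :=
    Finset.sum_filter_add_sum_filter_not S _ _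
  have hE : ∑ i ∈ S.filter (fun i => μ i0 k = μ i k), (∑ m ∈ S, dInd μ i m k)
      = (S.filter (fun i => μ i0 k = μ i k)).card * (F.card : ℝ) := by
    have hinner : ∀ i ∈ S.filter (fun i => μ i0 k = μ i k),
        (∑ m ∈ S, dInd μ i m k) = (F.card : ℝ) := by
      intro i hi
      rw [Finset.sum_congr rfl (fun m hm => hsame i (Finset.mem_filter.mp hi).1
        (Finset.mem_filter.mp hi).2 m hm), hd0]
    rw [Finset.sum_congr rfl hinner, Finset.sum_const, nsmul_eq_mul]
  have hFsum : ∑ i ∈ S.filter (fun i => ¬ μ i0 k = μ i k), (∑ m ∈ S, dInd μ i m k)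
      = (F.card : ℝ) * ((S.card : ℝ) - F.card) := by
    have hinner : ∀ i ∈ S.filter (fun i => ¬ μ i0 k = μ i k),
        (∑ m ∈ S, dInd μ i m k) = ((S.card : ℝ) - F.card) := by
      intro i hi
      rw [Finset.sum_congr rfl (fun m hm => hflip i (Finset.mem_filter.mp hi).1
        (Finset.mem_filter.mp hi).2 m hm), Finset.sum_sub_distrib, Finset.sum_const,
        nsmul_eq_mul, mul_one, hd0]
    rw [Finset.sum_congr rfl hinner, Finset.sum_const, nsmul_eq_mul, ← hFdef]
  have hcards : (S.filter (fun i => μ i0 k = μ i k)).card + F.card = S.card := by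
    rw [hFdef]; exact Finset.card_filter_add_card_filter_not _
  have hFle : F.card ≤ S.card := Finset.card_le_card (Finset.filter_subset _ _)
  rw [← hsplit, hE, hFsum, hd0]
  have h1 : ((S.filter (fun i => μ i0 k = μ i k)).card : ℝ) + F.card = S.card := by
    exact_mod_cast hcards
  have h2 : (F.card : ℝ) ≤ S.card := by exact_mod_cast hFle
  have h3 : (0:ℝ) ≤ F.card := by positivity
  nlinarith

set_option maxHeartbeats 1600000 in
/-- **Lower bound on the decision-estimation coefficient for the hard instance.** There is an
absolute constant `c_γ > 0` such that for every hard instance (conditions (1)–(4)), every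
`γ ≤ c_γ · min (ε⁻¹, λ⁻² · C̃)` satisfies `dec_γ > 3ε`, where `C̃` is the randomized
classification-coefficient of the instance. -/
theorem dec_lower_bound_hard_instance :
    ∃ cγ : ℝ, 0 < cγ ∧
      ∀ (Ω : Type) [MeasurableSpace Ω] (M K : ℕ), 2 ≤ M → 1 ≤ K →
      ∀ (ε lam : ℝ), ε ∈ Set.Ioc (0 : ℝ) (1/40) → lam ∈ Set.Ioc (0 : ℝ) (1/4) →
      ∀ (μ : Fin M → Fin K → ℝ) (kstar : Fin M → Fin K) (ν : Fin M → Fin K → Measure Ω)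
        (A : Finset (Fin K)),
        -- `A` is the set of separating (information-revealing) arms, assumed nonempty
        A = Finset.univ \ Finset.image kstar Finset.univ →
        A.Nonempty →
        -- (1) each instance has its unique optimal arm with margin `10ε`
        (∀ i : Fin M, μ i (kstar i) = 3/4 + 10 * ε) →
        (∀ i j : Fin M, j ≠ i → μ j (kstar i) = 3/4) →
        -- (2) separating arms have means `(1 ± λ)/2`
        (∀ k ∈ A, ∀ i : Fin M, μ i k = (1 + lam)/2 ∨ μ i k = (1 - lam)/2) →
        -- (3) Hellinger bound on separating arms
        (∀ k ∈ A, ∀ i m : Fin M,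
          hellingerSq (ν i k) (ν m k) ≤ lam ^ 2 * (if μ i k = μ m k then 0 else 1)) →
        -- (4) Hellinger bound on non-separating arms
        (∀ k ∉ A, ∀ i m : Fin M, hellingerSq (ν i k) (ν m k) ≤ 200 * ε ^ 2) →
        -- the randomized classification-coefficient
        ∀ Ctilde : ℝ≥0∞,
        Ctilde = (⨅ S : {S : Finset (Fin M) // 1 < S.card},
            ⨆ π : {π : Fin K → ℝ // π ∈ stdSimplex ℝ (Fin K) ∧ ∀ k ∉ A, π k = 0},
              ⨅ i : {i // i ∈ S.1},
                ENNReal.ofReal ((1 / (S.1.card : ℝ)) *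
                  ∑ m ∈ S.1, ∑ k ∈ A, π.1 k * (if μ i.1 k = μ m k then 0 else 1)))⁻¹ →
        -- the PAC decision-estimation coefficient
        ∀ dec : ℝ → ℝ,
        (∀ γ : ℝ, dec γ =
          ⨆ ω : stdSimplex ℝ (Fin M), ⨅ π : stdSimplex ℝ (Fin K), ⨆ i : Fin M,
            ((∑ k, π.1 k * (μ i (kstar i) - μ i k)) -
              γ * ∑ k, ∑ m, π.1 k * ω.1 m * hellingerSq (ν i k) (ν m k))) →
        ∀ γ : ℝ, 0 < γ →
          ENNReal.ofReal γ ≤ ENNReal.ofReal cγ *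
            min (ENNReal.ofReal ε)⁻¹ ((ENNReal.ofReal (lam ^ 2))⁻¹ * Ctilde) →
          3 * ε < dec γ := by
  classical
  refine ⟨1/1000, by norm_num, ?_⟩
  intro Ω _inst M K hM hK ε lam hε hlam μ kstar ν A hA hAne h1 h2 h3 hHA hHN Ctilde hC dec hdec
    γ hγ0 hγle
  obtain ⟨hε0, hε1⟩ := hε
  obtain ⟨hl0, hl1⟩ := hlam
  haveI : Nonempty (Fin M) := ⟨⟨0, by omega⟩⟩
  haveI : Nonempty (Fin K) := ⟨⟨0, by omega⟩⟩
  have hgl2pos : (0:ℝ) < γ * lam^2 := by positivity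
  -- step 1 : γ * ε ≤ 1/1000
  have hγε : γ * ε ≤ 1/1000 := by
    have hstep : ENNReal.ofReal γ ≤ ENNReal.ofReal (1/1000) * (ENNReal.ofReal ε)⁻¹ :=
      le_trans hγle (mul_le_mul_right (min_le_left _ _) _)
    have hne0 : ENNReal.ofReal ε ≠ 0 := by
      simp only [ne_eq, ENNReal.ofReal_eq_zero, not_le]; exact hε0
    have h2 : ENNReal.ofReal γ * ENNReal.ofReal ε ≤ ENNReal.ofReal (1/1000) := by
      calc ENNReal.ofReal γ * ENNReal.ofReal ε
          ≤ ENNReal.ofReal (1/1000) * (ENNReal.ofReal ε)⁻¹ * ENNReal.ofReal ε :=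
            mul_le_mul_left hstep _
        _ = ENNReal.ofReal (1/1000) * ((ENNReal.ofReal ε)⁻¹ * ENNReal.ofReal ε) := by ring
        _ = ENNReal.ofReal (1/1000) := by
            rw [ENNReal.inv_mul_cancel hne0 ENNReal.ofReal_ne_top, mul_one]
    rw [← ENNReal.ofReal_mul hγ0.le] at h2
    exact (ENNReal.ofReal_le_ofReal_iff (by norm_num)).mp h2
  -- step 2 : kstar injective, kstar i ∉ A
  have hkinj : ∀ a b : Fin M, kstar a = kstar b → a = b := by
    intro a b hab
    by_contra hne
    have h4 : μ a (kstar b) = 3/4 := h2 b a hne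
    have h5 : μ a (kstar a) = 3/4 + 10 * ε := h1 a
    rw [hab, h4] at h5
    linarith
  have hksA : ∀ i, kstar i ∉ A := by
    intro i hi
    rw [hA] at hi
    exact (Finset.mem_sdiff.mp hi).2 (Finset.mem_image_of_mem kstar (Finset.mem_univ i))
  -- step 3: gap facts
  have hΔA : ∀ i, ∀ k ∈ A, 1/8 ≤ μ i (kstar i) - μ i k := by
    intro i k hk
    rcases h3 k hk i with h | h <;> rw [h1 i, h] <;> linarith
  have hΔoth : ∀ i, ∀ k, k ∉ A → k ≠ kstar i → μ i (kstar i) - μ i k = 10 * ε := by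
    intro i k hkA hkne
    have hkim : k ∈ Finset.image kstar Finset.univ := by
      by_contra hkim
      exact hkA (hA ▸ Finset.mem_sdiff.mpr ⟨Finset.mem_univ k, hkim⟩)
    obtain ⟨j, -, hj⟩ := Finset.mem_image.mp hkim
    have hji : i ≠ j := by rintro rfl; exact hkne hj.symm
    rw [← hj, h1 i, h2 j i hji]
    ring
  have hΔnn : ∀ i k, 0 ≤ μ i (kstar i) - μ i k := by
    intro i k
    by_cases hk : k ∈ A
    · linarith [hΔA i k hk]
    · by_cases hke : k = kstar i
      · rw [hke]; linarith
      · rw [hΔoth i k hk hke]; linarith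
  have hΔle : ∀ i k, μ i (kstar i) - μ i k ≤ 1 := by
    intro i k
    have hub : 3/8 ≤ μ i k := by
      by_cases hk : k ∈ A
      · rcases h3 k hk i with h | h <;> rw [h] <;> linarith
      · by_cases hke : k = kstar i
        · rw [hke, h1 i]; linarith
        · have := hΔoth i k hk hke
          rw [h1 i] at this; linarith
    rw [h1 i]; linarith
  -- step 4: extract good subset S
  have hgl : ENNReal.ofReal γ ≤ ENNReal.ofReal (1/1000) * ((ENNReal.ofReal (lam^2))⁻¹ * Ctilde) :=
    le_trans hγle (mul_le_mul_right (min_le_right _ _) _)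
  rw [hC] at hgl
  set V := (⨅ S : {S : Finset (Fin M) // 1 < S.card},
      ⨆ π : {π : Fin K → ℝ // π ∈ stdSimplex ℝ (Fin K) ∧ ∀ k ∉ A, π k = 0},
        ⨅ i : {i // i ∈ S.1},
          ENNReal.ofReal ((1 / (S.1.card : ℝ)) *
            ∑ m ∈ S.1, ∑ k ∈ A, π.1 k * (if μ i.1 k = μ m k then 0 else 1))) with hVdef
  have hc00 : ENNReal.ofReal (γ * lam^2) ≠ 0 := by
    simp only [ne_eq, ENNReal.ofReal_eq_zero, not_le]; exact hgl2pos
  have hc0t : ENNReal.ofReal (γ * lam^2) ≠ ⊤ := ENNReal.ofReal_ne_top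
  have hkey : ENNReal.ofReal (γ * lam^2) * V ≤ ENNReal.ofReal (1/1000) := by
    have hsplit : ENNReal.ofReal (γ * lam^2) = ENNReal.ofReal γ * ENNReal.ofReal (lam^2) :=
      ENNReal.ofReal_mul hγ0.le
    calc ENNReal.ofReal (γ * lam^2) * V
        = ENNReal.ofReal γ * (ENNReal.ofReal (lam^2) * V) := by rw [hsplit, mul_assoc]
      _ ≤ (ENNReal.ofReal (1/1000) * ((ENNReal.ofReal (lam^2))⁻¹ * V⁻¹)) *
            (ENNReal.ofReal (lam^2) * V) := mul_le_mul_left hgl _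
      _ = ENNReal.ofReal (1/1000) *
            (((ENNReal.ofReal (lam^2))⁻¹ * ENNReal.ofReal (lam^2)) * (V⁻¹ * V)) := by ring
      _ ≤ ENNReal.ofReal (1/1000) * (1 * 1) := by
          gcongr <;> exact ENNReal.inv_mul_le_one _
      _ = ENNReal.ofReal (1/1000) := by rw [mul_one, mul_one]
  have hVlt : V < ENNReal.ofReal (2/1000) / ENNReal.ofReal (γ * lam^2) := by
    by_contra hcon
    push_neg at hcon
    have hcontr : ENNReal.ofReal (2/1000) ≤ ENNReal.ofReal (1/1000) := by
      calc ENNReal.ofReal (2/1000)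
          = ENNReal.ofReal (γ * lam^2) * (ENNReal.ofReal (2/1000) / ENNReal.ofReal (γ * lam^2)) :=
            (ENNReal.mul_div_cancel hc00 hc0t).symm
        _ ≤ ENNReal.ofReal (γ * lam^2) * V := mul_le_mul_right hcon _
        _ ≤ ENNReal.ofReal (1/1000) := hkey
    rw [ENNReal.ofReal_le_ofReal_iff (by norm_num)] at hcontr
    norm_num at hcontr
  rw [hVdef] at hVlt
  obtain ⟨S0, hS0⟩ := iInf_lt_iff.mp hVlt
  have hWS : ENNReal.ofReal (γ * lam^2) *
      (⨆ π : {π : Fin K → ℝ // π ∈ stdSimplex ℝ (Fin K) ∧ ∀ k ∉ A, π k = 0},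
        ⨅ i : {i // i ∈ S0.1},
          ENNReal.ofReal ((1 / (S0.1.card : ℝ)) *
            ∑ m ∈ S0.1, ∑ k ∈ A, π.1 k * (if μ i.1 k = μ m k then 0 else 1)))
      ≤ ENNReal.ofReal (2/1000) := by
    calc ENNReal.ofReal (γ * lam^2) * _
        ≤ ENNReal.ofReal (γ * lam^2) *
            (ENNReal.ofReal (2/1000) / ENNReal.ofReal (γ * lam^2)) :=
          mul_le_mul_right hS0.le _
      _ = ENNReal.ofReal (2/1000) := ENNReal.mul_div_cancel hc00 hc0t
  set S := S0.1 with hSdef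
  have hcardS : 1 < S.card := S0.2
  have hSne : S.Nonempty := Finset.card_pos.mp (by omega)
  have hscard0 : (0:ℝ) < S.card := by exact_mod_cast Nat.lt_of_lt_of_le Nat.zero_lt_one hcardS.le
  -- step 5: per-arm minimizer bound
  have harm : ∀ k ∈ A, ∃ i0 ∈ S,
      (∀ i ∈ S, ∑ m ∈ S, dInd μ i0 m k ≤ ∑ m ∈ S, dInd μ i m k) ∧
      (γ * lam^2) * ((1 / (S.card : ℝ)) * ∑ m ∈ S, dInd μ i0 m k) ≤ 2/1000 := by
    intro k hkA
    obtain ⟨i0, hi0S, hmin⟩ := Finset.exists_min_image S (fun i => ∑ m ∈ S, dInd μ i m k) hSne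
    refine ⟨i0, hi0S, hmin, ?_⟩
    have hδmem : (fun k' => if k' = k then (1:ℝ) else 0) ∈ stdSimplex ℝ (Fin K) ∧
        ∀ k' ∉ A, (if k' = k then (1:ℝ) else 0) = 0 := by
      refine ⟨⟨fun k' => by by_cases h : k' = k <;> simp [h], by simp⟩, fun k' hk' => ?_⟩
      have : k' ≠ k := fun h => hk' (h ▸ hkA)
      simp [this]
    have hle1 : ENNReal.ofReal ((1 / (S.card : ℝ)) * ∑ m ∈ S, dInd μ i0 m k) ≤
        (⨆ π : {π : Fin K → ℝ // π ∈ stdSimplex ℝ (Fin K) ∧ ∀ k ∉ A, π k = 0},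
          ⨅ i : {i // i ∈ S0.1},
            ENNReal.ofReal ((1 / (S0.1.card : ℝ)) *
              ∑ m ∈ S0.1, ∑ k ∈ A, π.1 k * (if μ i.1 k = μ m k then 0 else 1))) := by
      refine le_trans (le_iInf fun i => ?_)
        (le_iSup (f := fun π : {π : Fin K → ℝ // π ∈ stdSimplex ℝ (Fin K) ∧ ∀ k ∉ A, π k = 0} =>
          ⨅ i : {i // i ∈ S0.1},
            ENNReal.ofReal ((1 / (S0.1.card : ℝ)) *
              ∑ m ∈ S0.1, ∑ k ∈ A, π.1 k * (if μ i.1 k = μ m k then 0 else 1)))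
          ⟨_, hδmem⟩)
      apply ENNReal.ofReal_le_ofReal
      have hsimp : ∀ m, ∑ k' ∈ A, (if k' = k then (1:ℝ) else 0) *
          (if μ i.1 k' = μ m k' then 0 else 1) = dInd μ i.1 m k := by
        intro m
        rw [Finset.sum_eq_single_of_mem k hkA (fun b _ hb => by simp [hb])]
        simp [dInd]
      rw [Finset.sum_congr rfl (fun m _ => hsimp m)]
      exact mul_le_mul_of_nonneg_left (hmin i.1 i.2) (by positivity)
    have hcomb : ENNReal.ofReal ((γ * lam^2) * ((1 / (S.card : ℝ)) * ∑ m ∈ S, dInd μ i0 m k)) ≤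
        ENNReal.ofReal (2/1000) := by
      rw [ENNReal.ofReal_mul hgl2pos.le]
      exact le_trans (mul_le_mul_right hle1 _) hWS
    exact (ENNReal.ofReal_le_ofReal_iff (by norm_num)).mp hcomb
  -- step 6: averaged bound per arm
  have hkperA : ∀ k ∈ A,
      (γ * lam^2) * ((1 / (S.card : ℝ)) * ∑ i ∈ S, ∑ m ∈ S, dInd μ i m k)
        ≤ (4/1000) * S.card := by
    intro k hk
    obtain ⟨i0, hi0S, hmin, hbd⟩ := harm k hk
    have hcnt := counting μ k S ((1+lam)/2) ((1-lam)/2) (fun i _ => h3 k hk i) i0 hi0S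
    have hZ0 : (0:ℝ) ≤ ∑ m ∈ S, dInd μ i0 m k :=
      Finset.sum_nonneg (fun m _ => dInd_nonneg μ i0 m k)
    have hs1 : (1 / (S.card : ℝ)) * (S.card : ℝ) = 1 := one_div_mul_cancel (by positivity)
    nlinarith [mul_le_mul_of_nonneg_left hcnt
        (by positivity : (0:ℝ) ≤ (γ * lam^2) * (1 / (S.card : ℝ))),
      mul_le_mul_of_nonneg_left hbd (by positivity : (0:ℝ) ≤ 2 * (S.card : ℝ))]
  -- step 7: main per-distribution claim
  have hmain : ∀ p : Fin K → ℝ, (∀ k, 0 ≤ p k) → (∑ k, p k = 1) → ∃ i : Fin M,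
      4 * ε ≤ (∑ k, p k * (μ i (kstar i) - μ i k)) -
        γ * ∑ k, ∑ m, p k * (if m ∈ S then 1 / (S.card : ℝ) else 0) *
          hellingerSq (ν i k) (ν m k) := by
    intro p hp0 hp1
    set pA := ∑ k ∈ A, p k with hpAdef
    set pN := ∑ k ∈ Finset.univ \ A, p k with hpNdef
    have hps : pN + pA = 1 := by
      rw [hpNdef, hpAdef, Finset.sum_sdiff (Finset.subset_univ A), hp1]
    have hpA0 : 0 ≤ pA := Finset.sum_nonneg (fun k _ => hp0 k)
    have hpN0 : 0 ≤ pN := Finset.sum_nonneg (fun k _ => hp0 k)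
    set T : Fin M → ℝ :=
      fun i => ∑ k ∈ A, p k * ((1 / (S.card : ℝ)) * ∑ m ∈ S, dInd μ i m k) with hTdef
    have hTnn : ∀ i, 0 ≤ T i := by
      intro i
      apply Finset.sum_nonneg
      intro k _
      have h8 : (0:ℝ) ≤ ∑ m ∈ S, dInd μ i m k := Finset.sum_nonneg (fun m _ => dInd_nonneg μ i m k)
      exact mul_nonneg (hp0 k) (mul_nonneg (by positivity) h8)
    have hTsum : (γ * lam^2) * ∑ i ∈ S, T i ≤ (4/1000) * S.card * pA := by
      have hswap : ∑ i ∈ S, T i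
          = ∑ k ∈ A, p k * ((1 / (S.card : ℝ)) * ∑ i ∈ S, ∑ m ∈ S, dInd μ i m k) := by
        rw [hTdef]
        simp only []
        rw [Finset.sum_comm]
        simp only [Finset.mul_sum]
      rw [hswap, Finset.mul_sum]
      calc ∑ k ∈ A, (γ * lam^2) * (p k * ((1 / (S.card : ℝ)) * ∑ i ∈ S, ∑ m ∈ S, dInd μ i m k))
          ≤ ∑ k ∈ A, p k * ((4/1000) * S.card) := by
            apply Finset.sum_le_sum
            intro k hk
            have hb := hkperA k hk
            nlinarith [hp0 k]
        _ = (4/1000) * S.card * pA := by rw [← Finset.sum_mul]; ring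
    obtain ⟨i1, hi1S, hmin1⟩ := Finset.exists_min_image S T hSne
    have herase : (S.erase i1).Nonempty := by
      rw [← Finset.card_pos, Finset.card_erase_of_mem hi1S]; omega
    obtain ⟨i2, hi2e, hmin2⟩ := Finset.exists_min_image (S.erase i1) T herase
    have hi2S : i2 ∈ S := Finset.mem_of_mem_erase hi2e
    have hi12 : i1 ≠ i2 := (Finset.ne_of_mem_erase hi2e).symm
    have hcards2 : (2:ℝ) ≤ S.card := by exact_mod_cast hcardS
    have hT2 : (γ * lam^2) * T i2 ≤ (8/1000) * pA := by
      have hsum_e : ((S.card:ℝ) - 1) * T i2 ≤ ∑ i ∈ S, T i := by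
        have ha : (S.erase i1).card • T i2 ≤ ∑ i ∈ S.erase i1, T i :=
          Finset.card_nsmul_le_sum _ _ _ (fun x hx => hmin2 x hx)
        have hb : ∑ i ∈ S.erase i1, T i ≤ ∑ i ∈ S, T i :=
          Finset.sum_le_sum_of_subset_of_nonneg (Finset.erase_subset _ _) (fun i _ _ => hTnn i)
        have hc : ((S.erase i1).card : ℝ) = (S.card : ℝ) - 1 := by
          rw [Finset.card_erase_of_mem hi1S]
          have : 1 ≤ S.card := hcardS.le
          push_cast [Nat.cast_sub this]
          ring
        rw [nsmul_eq_mul, hc] at ha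
        linarith
      have h6 : ((S.card:ℝ)-1) * ((γ * lam^2) * T i2) ≤ (4/1000) * S.card * pA := by
        calc ((S.card:ℝ)-1) * ((γ * lam^2) * T i2)
            = (γ * lam^2) * (((S.card:ℝ)-1) * T i2) := by ring
          _ ≤ (γ * lam^2) * ∑ i ∈ S, T i := mul_le_mul_of_nonneg_left hsum_e hgl2pos.le
          _ ≤ (4/1000) * S.card * pA := hTsum
      have h7 : (4/1000) * (S.card:ℝ) * pA ≤ (8/1000) * ((S.card:ℝ)-1) * pA := by
        nlinarith [mul_nonneg (show (0:ℝ) ≤ (S.card:ℝ)-2 by linarith) hpA0]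
      exact le_of_mul_le_mul_left
        (by linarith : ((S.card:ℝ)-1) * ((γ * lam^2) * T i2) ≤ ((S.card:ℝ)-1) * ((8/1000) * pA))
        (by linarith : (0:ℝ) < (S.card:ℝ)-1)
    have hT1 : (γ * lam^2) * T i1 ≤ (8/1000) * pA :=
      le_trans (mul_le_mul_of_nonneg_left (hmin1 i2 hi2S) (le_of_lt hgl2pos)) hT2
    have hq12 : p (kstar i1) + p (kstar i2) ≤ pN := by
      have hsub : {kstar i1, kstar i2} ⊆ Finset.univ \ A := by
        intro x hx
        rcases Finset.mem_insert.mp hx with rfl | hx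
        · exact Finset.mem_sdiff.mpr ⟨Finset.mem_univ _, hksA i1⟩
        · rw [Finset.mem_singleton.mp hx]
          exact Finset.mem_sdiff.mpr ⟨Finset.mem_univ _, hksA i2⟩
      have hmono := Finset.sum_le_sum_of_subset_of_nonneg hsub (fun k _ _ => hp0 k)
      rwa [Finset.sum_pair (fun h => hi12 (hkinj _ _ h))] at hmono
    have hchoice : ∃ i ∈ S, p (kstar i) ≤ pN/2 ∧ (γ * lam^2) * T i ≤ (8/1000) * pA := by
      by_cases hq1 : p (kstar i1) ≤ pN/2
      · exact ⟨i1, hi1S, hq1, hT1⟩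
      · exact ⟨i2, hi2S, by linarith, hT2⟩
    obtain ⟨i, hiS, hqi, hTi⟩ := hchoice
    refine ⟨i, ?_⟩
    have hks_mem : kstar i ∈ Finset.univ \ A :=
      Finset.mem_sdiff.mpr ⟨Finset.mem_univ _, hksA i⟩
    -- reward lower bound
    have hreward : pA * (1/8) + (pN - p (kstar i)) * (10 * ε)
        ≤ ∑ k, p k * (μ i (kstar i) - μ i k) := by
      have hsplitk : ∑ k, p k * (μ i (kstar i) - μ i k)
          = ∑ k ∈ Finset.univ \ A, p k * (μ i (kstar i) - μ i k)
            + ∑ k ∈ A, p k * (μ i (kstar i) - μ i k) :=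
        (Finset.sum_sdiff (Finset.subset_univ A)).symm
      have hApart : pA * (1/8) ≤ ∑ k ∈ A, p k * (μ i (kstar i) - μ i k) := by
        rw [hpAdef, Finset.sum_mul]
        apply Finset.sum_le_sum
        intro k hk
        exact mul_le_mul_of_nonneg_left (hΔA i k hk) (hp0 k)
      have hNpart : (pN - p (kstar i)) * (10 * ε)
          ≤ ∑ k ∈ Finset.univ \ A, p k * (μ i (kstar i) - μ i k) := by
        rw [← Finset.add_sum_erase _ _ hks_mem, sub_self, mul_zero, zero_add]
        have hsum_er : ∑ k ∈ (Finset.univ \ A).erase (kstar i), p k * (μ i (kstar i) - μ i k)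
            = ∑ k ∈ (Finset.univ \ A).erase (kstar i), p k * (10 * ε) := by
          apply Finset.sum_congr rfl
          intro k hk
          have hk1 : k ≠ kstar i := (Finset.mem_erase.mp hk).1
          have hk2 : k ∉ A := (Finset.mem_sdiff.mp (Finset.mem_erase.mp hk).2).2
          rw [hΔoth i k hk2 hk1]
        rw [hsum_er, ← Finset.sum_mul, Finset.sum_erase_eq_sub hks_mem, ← hpNdef]
      linarith
    -- penalty upper bound
    have hpen : γ * ∑ k, ∑ m, p k * (if m ∈ S then 1 / (S.card : ℝ) else 0) *
          hellingerSq (ν i k) (ν m k) ≤ (8/1000) * pA + (200/1000) * ε * pN := by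
      have hscne : (S.card : ℝ) ≠ 0 := ne_of_gt hscard0
      have hinner : ∀ k : Fin K, ∑ m, p k * (if m ∈ S then 1 / (S.card : ℝ) else 0) *
            hellingerSq (ν i k) (ν m k)
          = ∑ m ∈ S, p k * (1 / (S.card : ℝ)) * hellingerSq (ν i k) (ν m k) := by
        intro k
        rw [← Finset.sum_subset (Finset.subset_univ S) (fun m _ hm => by simp [hm])]
        exact Finset.sum_congr rfl (fun m hm => by rw [if_pos hm])
      have hAk : ∀ k ∈ A, ∑ m ∈ S, p k * (1 / (S.card : ℝ)) * hellingerSq (ν i k) (ν m k)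
          ≤ p k * (lam^2 * ((1 / (S.card : ℝ)) * ∑ m ∈ S, dInd μ i m k)) := by
        intro k hk
        calc ∑ m ∈ S, p k * (1 / (S.card : ℝ)) * hellingerSq (ν i k) (ν m k)
            ≤ ∑ m ∈ S, p k * (1 / (S.card : ℝ)) * (lam^2 * dInd μ i m k) := by
              apply Finset.sum_le_sum
              intro m hm
              exact mul_le_mul_of_nonneg_left (by simpa [dInd] using hHA k hk i m)
                (mul_nonneg (hp0 k) (by positivity))
          _ = p k * (lam^2 * ((1 / (S.card : ℝ)) * ∑ m ∈ S, dInd μ i m k)) := by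
              simp only [Finset.mul_sum]
              exact Finset.sum_congr rfl (fun m _ => by ring)
      have hNk : ∀ k ∈ Finset.univ \ A,
          ∑ m ∈ S, p k * (1 / (S.card : ℝ)) * hellingerSq (ν i k) (ν m k)
          ≤ p k * (200 * ε^2) := by
        intro k hk
        have hkA : k ∉ A := (Finset.mem_sdiff.mp hk).2
        calc ∑ m ∈ S, p k * (1 / (S.card : ℝ)) * hellingerSq (ν i k) (ν m k)
            ≤ ∑ m ∈ S, p k * (1 / (S.card : ℝ)) * (200 * ε^2) :=
              Finset.sum_le_sum (fun m _ => mul_le_mul_of_nonneg_left (hHN k hkA i m)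
                (mul_nonneg (hp0 k) (by positivity)))
          _ = p k * (200 * ε^2) := by
              rw [Finset.sum_const, nsmul_eq_mul]
              field_simp
      have hPle : ∑ k, ∑ m, p k * (if m ∈ S then 1 / (S.card : ℝ) else 0) *
            hellingerSq (ν i k) (ν m k) ≤ lam^2 * T i + pN * (200 * ε^2) := by
        calc ∑ k, ∑ m, p k * (if m ∈ S then 1 / (S.card : ℝ) else 0) *
              hellingerSq (ν i k) (ν m k)
            = ∑ k, ∑ m ∈ S, p k * (1 / (S.card : ℝ)) * hellingerSq (ν i k) (ν m k) :=
              Finset.sum_congr rfl (fun k _ => hinner k)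
          _ = (∑ k ∈ Finset.univ \ A, ∑ m ∈ S, p k * (1 / (S.card : ℝ)) *
                  hellingerSq (ν i k) (ν m k))
              + ∑ k ∈ A, ∑ m ∈ S, p k * (1 / (S.card : ℝ)) * hellingerSq (ν i k) (ν m k) :=
              (Finset.sum_sdiff (Finset.subset_univ A)).symm
          _ ≤ pN * (200 * ε^2) + lam^2 * T i := by
              apply add_le_add
              · calc ∑ k ∈ Finset.univ \ A, ∑ m ∈ S, p k * (1 / (S.card : ℝ)) *
                      hellingerSq (ν i k) (ν m k)
                    ≤ ∑ k ∈ Finset.univ \ A, p k * (200 * ε^2) := Finset.sum_le_sum hNk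
                  _ = pN * (200 * ε^2) := by rw [hpNdef, Finset.sum_mul]
              · calc ∑ k ∈ A, ∑ m ∈ S, p k * (1 / (S.card : ℝ)) * hellingerSq (ν i k) (ν m k)
                    ≤ ∑ k ∈ A, p k * (lam^2 * ((1 / (S.card : ℝ)) * ∑ m ∈ S, dInd μ i m k)) :=
                      Finset.sum_le_sum hAk
                  _ = lam^2 * T i := by
                      rw [hTdef]
                      simp only []
                      rw [Finset.mul_sum]
                      exact Finset.sum_congr rfl (fun k _ => by ring)
          _ = lam^2 * T i + pN * (200 * ε^2) := add_comm _ _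
      have hy2 : 200 * (ε * pN) * (γ * ε) ≤ 200 * (ε * pN) * (1/1000) :=
        mul_le_mul_of_nonneg_left hγε (by positivity)
      calc γ * ∑ k, ∑ m, p k * (if m ∈ S then 1 / (S.card : ℝ) else 0) *
            hellingerSq (ν i k) (ν m k)
          ≤ γ * (lam^2 * T i + pN * (200 * ε^2)) := mul_le_mul_of_nonneg_left hPle hγ0.le
        _ = (γ * lam^2) * T i + 200 * (ε * pN) * (γ * ε) := by ring
        _ ≤ (8/1000) * pA + 200 * (ε * pN) * (1/1000) := add_le_add hTi hy2
        _ = (8/1000) * pA + (200/1000) * ε * pN := by ring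
    have e1 : 0 ≤ pA * (117/1000 - 4*ε) := mul_nonneg hpA0 (by linarith)
    have e2 : 0 ≤ ε * pN := mul_nonneg hε0.le hpN0
    have e4 : ε * p (kstar i) ≤ ε * (pN/2) := mul_le_mul_of_nonneg_left hqi hε0.le
    have e5 : ε * pN + ε * pA = ε := by
      have : ε * pN + ε * pA = ε * (pN + pA) := by ring
      rw [this, hps, mul_one]
    nlinarith [hreward, hpen]
  -- step 8: assemble
  set ωs : Fin M → ℝ := fun m => if m ∈ S then 1 / (S.card : ℝ) else 0 with hωdef
  have hωmem : ωs ∈ stdSimplex ℝ (Fin M) := by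
    refine ⟨fun m => ?_, ?_⟩
    · rw [hωdef]
      dsimp only
      split
      · positivity
      · exact le_refl 0
    · rw [hωdef]
      simp only []
      rw [Finset.sum_ite_mem, Finset.univ_inter, Finset.sum_const, nsmul_eq_mul]
      field_simp
  set Hb : ℝ := ∑ i : Fin M, ∑ k : Fin K, ∑ m : Fin M, |hellingerSq (ν i k) (ν m k)|
    with hHbdef
  have hHb0 : 0 ≤ Hb := by positivity
  have habs : ∀ (i : Fin M) (k : Fin K) (m : Fin M), |hellingerSq (ν i k) (ν m k)| ≤ Hb := by
    intro i k m
    have t1 : |hellingerSq (ν i k) (ν m k)| ≤ ∑ m' : Fin M, |hellingerSq (ν i k) (ν m' k)| :=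
      Finset.single_le_sum (f := fun m' => |hellingerSq (ν i k) (ν m' k)|)
        (fun m' _ => abs_nonneg _) (Finset.mem_univ m)
    have t2 : ∑ m' : Fin M, |hellingerSq (ν i k) (ν m' k)|
        ≤ ∑ k' : Fin K, ∑ m' : Fin M, |hellingerSq (ν i k') (ν m' k')| :=
      Finset.single_le_sum
        (f := fun k' => ∑ m' : Fin M, |hellingerSq (ν i k') (ν m' k')|)
        (fun k' _ => Finset.sum_nonneg fun m' _ => abs_nonneg _) (Finset.mem_univ k)
    have t3 : ∑ k' : Fin K, ∑ m' : Fin M, |hellingerSq (ν i k') (ν m' k')| ≤ Hb := by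
      rw [hHbdef]
      exact Finset.single_le_sum
        (f := fun i' => ∑ k' : Fin K, ∑ m' : Fin M, |hellingerSq (ν i' k') (ν m' k')|)
        (fun i' _ => Finset.sum_nonneg fun k' _ => Finset.sum_nonneg fun m' _ => abs_nonneg _)
        (Finset.mem_univ i)
    linarith
  have hpen_abs : ∀ (w : Fin M → ℝ) (q : Fin K → ℝ), w ∈ stdSimplex ℝ (Fin M) →
      q ∈ stdSimplex ℝ (Fin K) → ∀ i : Fin M,
      |∑ k, ∑ m, q k * w m * hellingerSq (ν i k) (ν m k)| ≤ Hb := by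
    intro w q hw hq i
    calc |∑ k, ∑ m, q k * w m * hellingerSq (ν i k) (ν m k)|
        ≤ ∑ k, |∑ m, q k * w m * hellingerSq (ν i k) (ν m k)| := Finset.abs_sum_le_sum_abs _ _
      _ ≤ ∑ k, ∑ m, |q k * w m * hellingerSq (ν i k) (ν m k)| :=
          Finset.sum_le_sum (fun k _ => Finset.abs_sum_le_sum_abs _ _)
      _ ≤ ∑ k, ∑ m, q k * w m * Hb := by
          apply Finset.sum_le_sum
          intro k _
          apply Finset.sum_le_sum
          intro m _
          rw [abs_mul, abs_mul, abs_of_nonneg (hq.1 k), abs_of_nonneg (hw.1 m)]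
          exact mul_le_mul_of_nonneg_left (habs i k m) (mul_nonneg (hq.1 k) (hw.1 m))
      _ = ∑ k, q k * ((∑ m, w m) * Hb) := by
          apply Finset.sum_congr rfl
          intro k _
          rw [Finset.sum_mul, Finset.mul_sum]
          exact Finset.sum_congr rfl (fun m _ => by ring)
      _ = (∑ k, q k) * ((∑ m, w m) * Hb) := (Finset.sum_mul _ _ _).symm
      _ = Hb := by rw [hq.2, hw.2, one_mul, one_mul]
  set FF : ↥(stdSimplex ℝ (Fin M)) → ↥(stdSimplex ℝ (Fin K)) → Fin M → ℝ :=
    fun w q i => (∑ k, q.1 k * (μ i (kstar i) - μ i k)) -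
      γ * ∑ k, ∑ m, q.1 k * w.1 m * hellingerSq (ν i k) (ν m k) with hFFdef
  have hf_ub : ∀ (w : ↥(stdSimplex ℝ (Fin M))) (q : ↥(stdSimplex ℝ (Fin K))) (i : Fin M),
      FF w q i ≤ 1 + γ * Hb := by
    intro w q i
    rw [hFFdef]
    dsimp only
    have hr : ∑ k, q.1 k * (μ i (kstar i) - μ i k) ≤ 1 := by
      calc ∑ k, q.1 k * (μ i (kstar i) - μ i k) ≤ ∑ k, q.1 k * 1 :=
            Finset.sum_le_sum (fun k _ => mul_le_mul_of_nonneg_left (hΔle i k) (q.2.1 k))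
        _ = 1 := by simp only [mul_one]; exact q.2.2
    have hpb := hpen_abs w.1 q.1 w.2 q.2 i
    have hlow : γ * (-Hb) ≤ γ * ∑ k, ∑ m, q.1 k * w.1 m * hellingerSq (ν i k) (ν m k) :=
      mul_le_mul_of_nonneg_left (neg_le_of_abs_le hpb) hγ0.le
    nlinarith
  have hf_lb : ∀ (w : ↥(stdSimplex ℝ (Fin M))) (q : ↥(stdSimplex ℝ (Fin K))) (i : Fin M),
      -(γ * Hb) ≤ FF w q i := by
    intro w q i
    rw [hFFdef]
    dsimp only
    have hr : 0 ≤ ∑ k, q.1 k * (μ i (kstar i) - μ i k) :=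
      Finset.sum_nonneg (fun k _ => mul_nonneg (q.2.1 k) (hΔnn i k))
    have hpb := hpen_abs w.1 q.1 w.2 q.2 i
    have hup : γ * ∑ k, ∑ m, q.1 k * w.1 m * hellingerSq (ν i k) (ν m k) ≤ γ * Hb :=
      mul_le_mul_of_nonneg_left (le_of_abs_le hpb) hγ0.le
    linarith
  have hKpos : (0:ℝ) < (K:ℝ) := by exact_mod_cast hK
  have hq0mem : (fun _ : Fin K => (K:ℝ)⁻¹) ∈ stdSimplex ℝ (Fin K) := by
    refine ⟨fun _ => by positivity, ?_⟩
    rw [Finset.sum_const, nsmul_eq_mul, Finset.card_univ, Fintype.card_fin]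
    field_simp
  haveI hneM : Nonempty ↥(stdSimplex ℝ (Fin M)) := ⟨⟨ωs, hωmem⟩⟩
  haveI hneK : Nonempty ↥(stdSimplex ℝ (Fin K)) := ⟨⟨_, hq0mem⟩⟩
  rw [hdec γ]
  show 3 * ε < ⨆ w : ↥(stdSimplex ℝ (Fin M)), ⨅ q : ↥(stdSimplex ℝ (Fin K)), ⨆ i, FF w q i
  have hBddA : BddAbove (Set.range fun w : ↥(stdSimplex ℝ (Fin M)) =>
      ⨅ q : ↥(stdSimplex ℝ (Fin K)), ⨆ i : Fin M, FF w q i) := by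
    refine ⟨1 + γ * Hb, ?_⟩
    rintro z ⟨w, rfl⟩
    have hbb : BddBelow (Set.range fun q : ↥(stdSimplex ℝ (Fin K)) =>
        ⨆ i : Fin M, FF w q i) := by
      refine ⟨-(γ * Hb), ?_⟩
      rintro z ⟨q, rfl⟩
      exact le_trans (hf_lb w q ⟨0, by omega⟩)
        (le_ciSup (Set.Finite.bddAbove (Set.finite_range _)) _)
    exact ciInf_le_of_le hbb ⟨_, hq0mem⟩ (ciSup_le (fun i => hf_ub w ⟨_, hq0mem⟩ i))
  have hstep1 : ∀ q : ↥(stdSimplex ℝ (Fin K)), 4 * ε ≤ ⨆ i : Fin M, FF ⟨ωs, hωmem⟩ q i := by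
    intro q
    obtain ⟨i, hi⟩ := hmain q.1 q.2.1 q.2.2
    have hi' : 4 * ε ≤ FF ⟨ωs, hωmem⟩ q i := hi
    exact le_trans hi' (le_ciSup (Set.Finite.bddAbove (Set.finite_range _)) i)
  have hstep2 : 4 * ε ≤ ⨅ q : ↥(stdSimplex ℝ (Fin K)), ⨆ i : Fin M, FF ⟨ωs, hωmem⟩ q i :=
    le_ciInf hstep1
  have hstep3 : (⨅ q : ↥(stdSimplex ℝ (Fin K)), ⨆ i : Fin M, FF ⟨ωs, hωmem⟩ q i)
      ≤ ⨆ w : ↥(stdSimplex ℝ (Fin M)), ⨅ q : ↥(stdSimplex ℝ (Fin K)), ⨆ i : Fin M, FF w q i :=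
    le_ciSup hBddA ⟨ωs, hωmem⟩
  linarith
end
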